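/- For every n ≥ 1, the set ⟦⟨start, s_n⟩⟧_IO of outputs of the mtt M_ex in IO-mode on input s_n equals the set of all perfect {f,g}-trees of height 2^n in which any two internal nodes at the same depth carry the same label; in particular, this set has cardinality 2^(2^n). -/

import Mathlib

namespace MttF

/-- Finite ordered trees over a label type `α`. -/
inductive RTree (α : Type) : Type
  | node : α → List (RTree α) → RTree α

namespace RTree

variable {α β : Type}

/-- The root label of a tree. -/
def label : RTree α → α
  | node a _ => a

/-- The list of immediate subtrees of a tree. -/
def children : RTree α → List (RTree α)
  | node _ ts => ts

/-- Relabelling of trees. -/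
def map (f : α → β) : RTree α → RTree β
  | node a ts => node (f a) (ts.attach.map (fun x => map f x.1))
decreasing_by
  have := List.sizeOf_lt_of_mem x.2
  simp only [node.sizeOf_spec]
  omega

/-- A tree is well-formed with respect to a rank function if every node labeled
by a rank-`k` symbol has exactly `k` children. `T_Σ` is the set of well-formed
trees over `Σ`. -/
inductive Wf (rk : α → ℕ) : RTree α → Prop
  | node {a : α} {ts : List (RTree α)} :
      ts.length = rk a → (∀ t ∈ ts, Wf rk t) → Wf rk (node a ts)

/-- `Subtree u t` holds iff `u` is a subtree of `t` (rooted at some node of `t`). -/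
inductive Subtree : RTree α → RTree α → Prop
  | refl (t : RTree α) : Subtree t t
  | step {u c : RTree α} {a : α} {ts : List (RTree α)} :
      c ∈ ts → Subtree u c → Subtree u (node a ts)

end RTree

/-- Labels for output trees with parameters: trees over `Δ ∪ Y`. -/
inductive OLab (Δ : Type) : Type
  | out (d : Δ)
  | param (i : ℕ)

/-- Labels for right-hand sides of mtt rules: trees over `Δ ∪ (Q × X) ∪ Y`
(the second component of a call is the index of the input variable `x`). -/
inductive RLab (Δ Q : Type) : Type
  | out (d : Δ)
  | call (q : Q) (x : ℕ)
  | param (i : ℕ)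

/-- Labels for "semantic" trees over `Δ ∪ (Q × T_Σ) ∪ Y`. -/
inductive SLab (Γ Δ Q : Type) : Type
  | out (d : Δ)
  | call (q : Q) (s : RTree Γ)
  | param (i : ℕ)

/-- Trees over `Δ ∪ Y`. -/
abbrev OT (Δ : Type) := RTree (OLab Δ)
/-- Right-hand side trees over `Δ ∪ (Q × X) ∪ Y`. -/
abbrev Rhs (Δ Q : Type) := RTree (RLab Δ Q)
/-- Trees over `Δ ∪ (Q × T_Σ) ∪ Y`. -/
abbrev ST (Γ Δ Q : Type) := RTree (SLab Γ Δ Q)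

/-- First-order substitution `x_i := ss_i` on a label of a right-hand side
(indices are 0-based; for well-formed rules the index is always in range). -/
def RLab.subst {Γ Δ Q : Type} (ss : List (RTree Γ)) : RLab Δ Q → SLab Γ Δ Q
  | .out d => .out d
  | .param i => .param i
  | .call q x =>
    match ss[x]? with
    | some s => .call q s
    | none => .param x

/-- `r[x_1/s_1, …, x_k/s_k]`. -/
def substX {Γ Δ Q : Type} (ss : List (RTree Γ)) (r : Rhs Δ Q) : ST Γ Δ Q :=
  r.map (RLab.subst ss)

/-- Second-order (parameter) substitution `t[y_1/ts_1, …, y_n/ts_n]`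
(`y` indices are 0-based). -/
def substY {Δ : Type} (ts : List (OT Δ)) : OT Δ → OT Δ
  | .node (.param i) _ => ts.getD i (.node (.param i) [])
  | .node (.out d) us => .node (.out d) (us.attach.map (fun x => substY ts x.1))
decreasing_by
  have := List.sizeOf_lt_of_mem x.2
  simp only [RTree.node.sizeOf_spec]
  omega

/-- The embedding of `T_Δ` into the trees over `Δ ∪ Y`. -/
def embed {Δ : Type} (t : RTree Δ) : OT Δ := t.map OLab.out

variable {Γ Δ Q : Type}

/-- IO (call-by-value, inside-out) semantics: `SemIO rsel u t` holds iff
`t ∈ ⟦u⟧_IO`.  The rules of the transducer are given by a selector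
`rsel q σ ss`: the set of right-hand sides of the `⟨q,σ⟩`-rules that are
applicable when the children of the current input node are `ss` (for a plain
mtt this does not depend on `ss`, cf. `plainSel`). -/
inductive SemIO (rsel : Q → Γ → List (RTree Γ) → Set (Rhs Δ Q)) :
    ST Γ Δ Q → OT Δ → Prop
  | param (i : ℕ) :
      SemIO rsel (.node (.param i) []) (.node (.param i) [])
  | out {d : Δ} {us : List (ST Γ Δ Q)} {ts : List (OT Δ)}
      (hlen : ts.length = us.length)
      (h : ∀ i : Fin us.length, SemIO rsel (us.get i) (ts.get (i.cast hlen.symm))) :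
      SemIO rsel (.node (.out d) us) (.node (.out d) ts)
  | call {q : Q} {σ : Γ} {ss : List (RTree Γ)} {us : List (ST Γ Δ Q)}
      {r : Rhs Δ Q} {t₀ : OT Δ} {ts : List (OT Δ)}
      (hr : r ∈ rsel q σ ss)
      (h₀ : SemIO rsel (substX ss r) t₀)
      (hlen : ts.length = us.length)
      (h : ∀ i : Fin us.length, SemIO rsel (us.get i) (ts.get (i.cast hlen.symm))) :
      SemIO rsel (.node (.call q (.node σ ss)) us) (substY ts t₀)

mutual
/-- OI (call-by-name, outside-in) semantics: `SemOI rsel u t` holds iff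
`t ∈ ⟦u⟧_OI`. -/
inductive SemOI (rsel : Q → Γ → List (RTree Γ) → Set (Rhs Δ Q)) :
    ST Γ Δ Q → OT Δ → Prop
  | param (i : ℕ) :
      SemOI rsel (.node (.param i) []) (.node (.param i) [])
  | out {d : Δ} {us : List (ST Γ Δ Q)} {ts : List (OT Δ)}
      (hlen : ts.length = us.length)
      (h : ∀ i : Fin us.length, SemOI rsel (us.get i) (ts.get (i.cast hlen.symm))) :
      SemOI rsel (.node (.out d) us) (.node (.out d) ts)
  | call {q : Q} {σ : Γ} {ss : List (RTree Γ)} {us : List (ST Γ Δ Q)}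
      {r : Rhs Δ Q} {t₀ : OT Δ} {t : OT Δ}
      (hr : r ∈ rsel q σ ss)
      (h₀ : SemOI rsel (substX ss r) t₀)
      (hs : OISub rsel us t₀ t) :
      SemOI rsel (.node (.call q (.node σ ss)) us) t

/-- OI-substitution: `OISub rsel us t₀ t` holds iff `t ∈ (t₀ ←_OI (⟦us_1⟧_OI, …, ⟦us_n⟧_OI))`,
i.e. `t` is obtained from `t₀` by independently replacing every occurrence of a parameter
`y_i` by some member of `⟦us_i⟧_OI`. -/
inductive OISub (rsel : Q → Γ → List (RTree Γ) → Set (Rhs Δ Q)) :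
    List (ST Γ Δ Q) → OT Δ → OT Δ → Prop
  | param {us : List (ST Γ Δ Q)} {i : ℕ} {t : OT Δ}
      (h : i < us.length) (hsem : SemOI rsel (us.get ⟨i, h⟩) t) :
      OISub rsel us (.node (.param i) []) t
  | out {us : List (ST Γ Δ Q)} {d : Δ} {ts ts' : List (OT Δ)}
      (hlen : ts'.length = ts.length)
      (h : ∀ i : Fin ts.length, OISub rsel us (ts.get i) (ts'.get (i.cast hlen.symm))) :
      OISub rsel us (.node (.out d) ts) (.node (.out d) ts')
end

/-- The rule selector of a plain mtt: the applicable rules do not depend on the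
child subtrees of the current input node. -/
def plainSel (rules : Q → Γ → Set (Rhs Δ Q)) :
    Q → Γ → List (RTree Γ) → Set (Rhs Δ Q) :=
  fun q σ _ => rules q σ

/-- The translation `τ_{IO,M} ⊆ T_Σ × T_Δ` realized in IO mode. -/
def tauIO (rankΓ : Γ → ℕ) (rankΔ : Δ → ℕ)
    (rsel : Q → Γ → List (RTree Γ) → Set (Rhs Δ Q)) (q₀ : Q) :
    Set (RTree Γ × RTree Δ) :=
  {p | p.1.Wf rankΓ ∧ p.2.Wf rankΔ ∧
       SemIO rsel (.node (.call q₀ p.1) []) (embed p.2)}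

/-- The translation `τ_{OI,M} ⊆ T_Σ × T_Δ` realized in OI mode. -/
def tauOI (rankΓ : Γ → ℕ) (rankΔ : Δ → ℕ)
    (rsel : Q → Γ → List (RTree Γ) → Set (Rhs Δ Q)) (q₀ : Q) :
    Set (RTree Γ × RTree Δ) :=
  {p | p.1.Wf rankΓ ∧ p.2.Wf rankΔ ∧
       SemOI rsel (.node (.call q₀ p.1) []) (embed p.2)}

/-- Well-formedness of a right-hand side of a rule of an mtt whose current
input symbol has rank `k` and whose current state has rank `m`: output symbols
have the correct number of children, state calls `⟨q', x_i⟩` have `rank q'`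
children and `i < k`, and parameters `y_j` satisfy `j < m`. -/
inductive RhsWf (rankΔ : Δ → ℕ) (rankQ : Q → ℕ) (k m : ℕ) : Rhs Δ Q → Prop
  | out {d : Δ} {ts : List (Rhs Δ Q)}
      (hlen : ts.length = rankΔ d) (h : ∀ t ∈ ts, RhsWf rankΔ rankQ k m t) :
      RhsWf rankΔ rankQ k m (.node (.out d) ts)
  | call {q : Q} {x : ℕ} {ts : List (Rhs Δ Q)}
      (hx : x < k) (hlen : ts.length = rankQ q)
      (h : ∀ t ∈ ts, RhsWf rankΔ rankQ k m t) :
      RhsWf rankΔ rankQ k m (.node (.call q x) ts)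
  | param {i : ℕ} (hi : i < m) : RhsWf rankΔ rankQ k m (.node (.param i) [])

/-- Well-formedness of a tree over `Δ ∪ (Q × T_Σ) ∪ Y`. -/
inductive STWf (rankΓ : Γ → ℕ) (rankΔ : Δ → ℕ) (rankQ : Q → ℕ) : ST Γ Δ Q → Prop
  | out {d : Δ} {ts : List (ST Γ Δ Q)}
      (hlen : ts.length = rankΔ d) (h : ∀ t ∈ ts, STWf rankΓ rankΔ rankQ t) :
      STWf rankΓ rankΔ rankQ (.node (.out d) ts)
  | call {q : Q} {s : RTree Γ} {ts : List (ST Γ Δ Q)}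
      (hs : s.Wf rankΓ) (hlen : ts.length = rankQ q)
      (h : ∀ t ∈ ts, STWf rankΓ rankΔ rankQ t) :
      STWf rankΓ rankΔ rankQ (.node (.call q s) ts)
  | param (i : ℕ) : STWf rankΓ rankΔ rankQ (.node (.param i) [])

/-- A tree over `Δ ∪ (Q × T_Σ) ∪ Y` is parameter-free if no `y_i` occurs in it. -/
inductive NoParam : ST Γ Δ Q → Prop
  | node {l : SLab Γ Δ Q} {ts : List (ST Γ Δ Q)}
      (hl : ∀ i : ℕ, l ≠ .param i) (h : ∀ t ∈ ts, NoParam t) :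
      NoParam (.node l ts)

/-- A macro tree transducer `M = (Q, Σ, Δ, q₀, R)`.  The alphabets `Γ` (input),
`Δ` (output) and the set `Q` of states are ranked; `q₀` has rank `0`; `rules q σ`
is the (finite) set `R_{q,σ}` of right-hand sides of the `⟨q,σ⟩`-rules, and every
right-hand side is a well-formed tree over `Δ ∪ (Q × X_k) ∪ Y_m`. -/
structure MTT (Γ Δ Q : Type) where
  rankΓ : Γ → ℕ
  rankΔ : Δ → ℕ
  rankQ : Q → ℕ
  q₀ : Q
  q₀_rank : rankQ q₀ = 0
  rules : Q → Γ → Set (Rhs Δ Q)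
  rules_fin : ∀ q σ, (rules q σ).Finite
  rules_wf : ∀ q σ, ∀ r ∈ rules q σ, RhsWf rankΔ rankQ (rankΓ σ) (rankQ q) r

/-- The rule selector of a plain mtt. -/
def MTT.sel (M : MTT Γ Δ Q) : Q → Γ → List (RTree Γ) → Set (Rhs Δ Q) :=
  plainSel M.rules

end MttF
namespace MttF

/-- Input alphabet of `M_ex`: `a` of rank 1 and `e` of rank 0. -/
inductive GE : Type | a | e

def rkGE : GE → ℕ | .a => 1 | .e => 0

/-- Output alphabet of `M_ex`: `f`, `g` of rank 2 and `e` of rank 0. -/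
inductive DE : Type | f | g | e

def rkDE : DE → ℕ | .f => 2 | .g => 2 | .e => 0

/-- States of `M_ex`: `start` of rank 0 and `double` of rank 1. -/
inductive QE : Type | start | double

def rkQE : QE → ℕ | .start => 0 | .double => 1

/-- The rules of `M_ex`:
`⟨start, a(x₁)⟩ → ⟨double, x₁⟩(⟨double, x₁⟩(e))`,
`⟨double, a(x₁)⟩(y₁) → ⟨double, x₁⟩(⟨double, x₁⟩(y₁))`,
`⟨double, e⟩(y₁) → f(y₁,y₁)`, and `⟨double, e⟩(y₁) → g(y₁,y₁)`. -/
def rulesEx : QE → GE → Set (Rhs DE QE)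
  | .start, .a =>
      {.node (.call .double 0) [.node (.call .double 0) [.node (.out .e) []]]}
  | .double, .a =>
      {.node (.call .double 0) [.node (.call .double 0) [.node (.param 0) []]]}
  | .double, .e =>
      {.node (.out .f) [.node (.param 0) [], .node (.param 0) []],
       .node (.out .g) [.node (.param 0) [], .node (.param 0) []]}
  | .start, .e => ∅

/-- The input tree `s_n = a(a(⋯a(e)⋯))` with `n` `a`-nodes. -/
def sN : ℕ → RTree GE
  | 0 => .node .e []
  | n+1 => .node .a [sN n]

/-- `Perfect h t` holds iff `t` is a perfect `{f,g}`-tree of height `h`: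
every leaf is labeled `e` and lies at depth exactly `h`, and every internal
node is labeled `f` or `g` (and has two children). -/
inductive Perfect : ℕ → RTree DE → Prop
  | leaf : Perfect 0 (.node .e [])
  | node {h : ℕ} {d : DE} {l r : RTree DE} (hd : d = .f ∨ d = .g)
      (hl : Perfect h l) (hr : Perfect h r) :
      Perfect (h+1) (.node d [l, r])

/-- The set of labels of the nodes of `t` at depth `d` (the root has depth 0). -/
def labelsAt {α : Type} : ℕ → RTree α → Set α
  | 0, t => {t.label}
  | d+1, .node _ ts => {x | ∃ t ∈ ts, x ∈ labelsAt d t}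

/-
In IO mode the argument of a state call is evaluated once, before it is copied.  So the rules
`⟨double, e⟩(y₁) → f(y₁,y₁) | g(y₁,y₁)` put one label on a whole level, and `⟨double, s_k⟩(u)`
yields exactly the perfect trees of height `2^k` with one label per level and all leaves equal to
a single value of `u`: the rule for `a` stacks two such towers of height `2^k`, concatenating
their level sequences.  On `s_n`, starting from the leaf `e`, the outputs are the level-uniform
perfect trees of height `2^n`, one for each of the `2^(2^n)` sequences of level labels.
-/

namespace RTree

variable {α β : Type}

theorem map_node (f : α → β) (a : α) (ts : List (RTree α)) :
    map f (node a ts) = node (f a) (ts.map (map f)) := by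
  rw [map, List.map_attach_eq_pmap, List.pmap_eq_map]

theorem map_injective {f : α → β} (hf : Function.Injective f) :
    Function.Injective (map f)
  | node a ts, node b us, h => by
    rw [map_node, map_node, node.injEq] at h
    obtain ⟨hab, hts⟩ := h
    have hlen : ts.length = us.length := by simpa using congrArg List.length hts
    refine congrArg₂ node (hf hab) (List.ext_getElem hlen fun i hi hi' => ?_)
    have := List.sizeOf_lt_of_mem (List.getElem_mem hi)
    exact map_injective hf (by simpa [hi, hi'] using congrArg (·[i]?) hts)
termination_by t => sizeOf t
decreasing_by simp only [node.sizeOf_spec]; omega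

theorem labelsAt_succ_pair (d : ℕ) (a : α) (l r : RTree α) :
    labelsAt (d + 1) (node a [l, r]) = labelsAt d l ∪ labelsAt d r := by
  ext x
  simp [labelsAt]

end RTree

theorem substY_out {Δ : Type} (ts : List (OT Δ)) (d : Δ) (us : List (OT Δ)) :
    substY ts (.node (.out d) us) = .node (.out d) (us.map (substY ts)) := by
  rw [substY, List.map_attach_eq_pmap, List.pmap_eq_map]

theorem embed_injective {Δ : Type} : Function.Injective (embed (Δ := Δ)) :=
  RTree.map_injective fun _ _ h => OLab.out.inj h

theorem _root_.List.exists_length_eq_add_iff {α : Type} {P : List α → Prop} {m n : ℕ} :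
    (∃ l, l.length = m + n ∧ P l) ↔
      ∃ l₁ l₂, l₁.length = m ∧ l₂.length = n ∧ P (l₁ ++ l₂) := by
  constructor
  · rintro ⟨l, hl, hP⟩
    exact ⟨l.take m, l.drop m, by simp [hl], by simp [hl], by rwa [List.take_append_drop]⟩
  · rintro ⟨l₁, l₂, rfl, rfl, hP⟩
    exact ⟨l₁ ++ l₂, List.length_append, hP⟩

theorem ncard_setOf_length_eq (α : Type) [Fintype α] (m : ℕ) :
    {l : List α | l.length = m}.ncard = Fintype.card α ^ m := by
  rw [← Nat.card_coe_set_eq]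
  exact (Nat.card_eq_fintype_card (α := List.Vector α m)).trans (card_vector m)

section SemIO

variable {Γ Δ Q : Type} {rsel : Q → Γ → List (RTree Γ) → Set (Rhs Δ Q)}

theorem forall₂_semIO_iff {us : List (ST Γ Δ Q)} {ts : List (OT Δ)} :
    List.Forall₂ (SemIO rsel) us ts ↔ ∃ hlen : ts.length = us.length,
      ∀ i : Fin us.length, SemIO rsel (us.get i) (ts.get (i.cast hlen.symm)) := by
  rw [List.forall₂_iff_get]
  exact ⟨fun ⟨hlen, h⟩ => ⟨hlen.symm, fun i => h i i.2 _⟩,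
    fun ⟨hlen, h⟩ => ⟨hlen.symm, fun i hi _ => h ⟨i, hi⟩⟩⟩

theorem semIO_param_iff {i : ℕ} {t : OT Δ} :
    SemIO rsel (.node (.param i) []) t ↔ t = .node (.param i) [] :=
  ⟨fun h => by cases h; rfl, fun h => h ▸ .param i⟩

theorem semIO_out_iff {d : Δ} {us : List (ST Γ Δ Q)} {t : OT Δ} :
    SemIO rsel (.node (.out d) us) t ↔
      ∃ ts, List.Forall₂ (SemIO rsel) us ts ∧ t = .node (.out d) ts := by
  constructor
  · rintro (_ | ⟨hlen, h⟩)
    exact ⟨_, forall₂_semIO_iff.mpr ⟨hlen, h⟩, rfl⟩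
  · rintro ⟨ts, hts, rfl⟩
    obtain ⟨hlen, h⟩ := forall₂_semIO_iff.mp hts
    exact .out hlen h

theorem semIO_call_iff {q : Q} {σ : Γ} {ss : List (RTree Γ)} {us : List (ST Γ Δ Q)}
    {t : OT Δ} :
    SemIO rsel (.node (.call q (.node σ ss)) us) t ↔
      ∃ r ∈ rsel q σ ss, ∃ t₀ ts, SemIO rsel (substX ss r) t₀ ∧
        List.Forall₂ (SemIO rsel) us ts ∧ t = substY ts t₀ := by
  constructor
  · rintro (_ | _ | ⟨hr, h₀, hlen, h⟩)
    exact ⟨_, hr, _, _, h₀, forall₂_semIO_iff.mpr ⟨hlen, h⟩, rfl⟩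
  · rintro ⟨r, hr, t₀, ts, h₀, hts, rfl⟩
    obtain ⟨hlen, h⟩ := forall₂_semIO_iff.mp hts
    exact .call hr h₀ hlen h

end SemIO

def lab (b : Bool) : DE := if b then .f else .g

theorem lab_injective : Function.Injective lab := by
  intro a b h; cases a <;> cases b <;> simp_all [lab]

def uniformCtx (s : OT DE) : List Bool → OT DE
  | [] => s
  | b :: bs => .node (.out (lab b)) [uniformCtx s bs, uniformCtx s bs]

def uniformTree : List Bool → RTree DE
  | [] => .node .e []
  | b :: bs => .node (lab b) [uniformTree bs, uniformTree bs]

theorem uniformCtx_uniformCtx (s : OT DE) (bs₁ bs₂ : List Bool) :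
    uniformCtx (uniformCtx s bs₂) bs₁ = uniformCtx s (bs₁ ++ bs₂) := by
  induction bs₁ with
  | nil => rfl
  | cons b bs ih => simp [uniformCtx, ih]

theorem substY_uniformCtx (ts : List (OT DE)) (s : OT DE) (bs : List Bool) :
    substY ts (uniformCtx s bs) = uniformCtx (substY ts s) bs := by
  induction bs with
  | nil => rfl
  | cons b bs ih => simp [uniformCtx, substY_out, ih]

theorem embed_uniformTree (bs : List Bool) :
    embed (uniformTree bs) = uniformCtx (.node (.out .e) []) bs := by
  induction bs with
  | nil => simp [uniformTree, uniformCtx, embed, RTree.map_node]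
  | cons b bs ih => simp_all [uniformTree, uniformCtx, embed, RTree.map_node]

theorem uniformTree_injective : Function.Injective uniformTree
  | [], [], _ => rfl
  | [], b :: _, h | b :: _, [], h => by cases b <;> simp [uniformTree, lab] at h
  | b :: bs, b' :: bs', h => by
    simp only [uniformTree, RTree.node.injEq, List.cons.injEq] at h
    rw [lab_injective h.1, uniformTree_injective h.2.1]

section Mex

local notation "semEx" => SemIO (plainSel rulesEx)

theorem semIO_double_iff (k : ℕ) (u : ST GE DE QE) (t : OT DE) :
    semEx (.node (.call .double (sN k)) [u]) t ↔
      ∃ bs t₁, bs.length = 2 ^ k ∧ semEx u t₁ ∧ t = uniformCtx t₁ bs := by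
  induction k generalizing u t with
  | zero =>
    simp [sN, semIO_call_iff, semIO_out_iff, semIO_param_iff, plainSel, rulesEx, substX,
      RTree.map_node, RLab.subst, List.length_eq_one_iff, uniformCtx, substY_out, lab,
      List.forall₂_cons_left_iff, substY, or_comm]
  | succ k ih =>
    simp [sN, semIO_call_iff, semIO_param_iff, plainSel, rulesEx, substX,
      RTree.map_node, RLab.subst, ih, List.forall₂_cons_left_iff, pow_succ, mul_two,
      List.exists_length_eq_add_iff, uniformCtx_uniformCtx, substY_uniformCtx, substY, and_assoc]

theorem semIO_start_iff (n : ℕ) (t : OT DE) :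
    semEx (.node (.call .start (sN (n + 1))) []) t ↔
      ∃ bs, bs.length = 2 ^ (n + 1) ∧ t = uniformCtx (.node (.out .e) []) bs := by
  simp [sN, semIO_call_iff, semIO_out_iff, plainSel, rulesEx, substX, RTree.map_node,
    RLab.subst, semIO_double_iff, pow_succ, mul_two, List.exists_length_eq_add_iff,
    uniformCtx_uniformCtx, substY_uniformCtx, substY_out, and_assoc]

theorem setOf_semIO_start_eq_image {n : ℕ} (hn : 1 ≤ n) :
    {t : RTree DE | semEx (.node (.call .start (sN n)) []) (embed t)} =
      uniformTree '' {bs | bs.length = 2 ^ n} := by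
  obtain ⟨n, rfl⟩ := Nat.exists_eq_add_of_le' hn
  ext t
  simp only [Set.mem_ofPred_eq, Set.mem_image, semIO_start_iff, ← embed_uniformTree,
    embed_injective.eq_iff, eq_comm]

end Mex

theorem perfect_uniformTree (bs : List Bool) : Perfect bs.length (uniformTree bs) := by
  induction bs with
  | nil => exact .leaf
  | cons b bs ih => exact .node (by cases b <;> simp [lab]) ih ih

theorem subsingleton_labelsAt_uniformTree (d : ℕ) (bs : List Bool) :
    (labelsAt d (uniformTree bs)).Subsingleton := by
  induction d generalizing bs with
  | zero => exact Set.subsingleton_singleton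
  | succ d ih =>
    cases bs with
    | nil => simp [uniformTree, labelsAt]
    | cons b bs => simpa [uniformTree, RTree.labelsAt_succ_pair] using ih bs

theorem lab_mem_labelsAt_uniformTree (bs : List Bool) (i : ℕ) (hi : i < bs.length) :
    lab bs[i] ∈ labelsAt i (uniformTree bs) := by
  induction bs generalizing i with
  | nil => simp at hi
  | cons b bs ih =>
    cases i with
    | zero => rfl
    | succ i =>
      rw [uniformTree, RTree.labelsAt_succ_pair]
      exact .inl (ih i (by simpa using hi))

theorem exists_uniformTree_of_perfect {h : ℕ} {t : RTree DE} (hp : Perfect h t)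
    (hs : ∀ d, (labelsAt d t).Subsingleton) : ∃ bs, bs.length = h ∧ uniformTree bs = t := by
  induction hp with
  | leaf => exact ⟨[], rfl, rfl⟩
  | @node h x l r hx _ _ ihl ihr =>
    have hlr : ∀ d, labelsAt d l ⊆ labelsAt (d + 1) (.node x [l, r]) ∧
        labelsAt d r ⊆ labelsAt (d + 1) (.node x [l, r]) := fun d => by
      simp [RTree.labelsAt_succ_pair]
    obtain ⟨bsl, hbsl, rfl⟩ := ihl fun d => (hs (d + 1)).anti (hlr d).1
    obtain ⟨bsr, hbsr, rfl⟩ := ihr fun d => (hs (d + 1)).anti (hlr d).2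
    -- level `i + 1` of the parent contains the `i`-th labels of both subtrees
    obtain rfl : bsl = bsr := List.ext_getElem (hbsl.trans hbsr.symm) fun i hil hir =>
      lab_injective <| hs (i + 1) ((hlr i).1 (lab_mem_labelsAt_uniformTree bsl i hil))
        ((hlr i).2 (lab_mem_labelsAt_uniformTree bsr i hir))
    rcases hx with rfl | rfl
    · exact ⟨true :: bsl, by simp [hbsl], rfl⟩
    · exact ⟨false :: bsl, by simp [hbsl], rfl⟩

theorem setOf_perfect_uniform_eq_image (h : ℕ) :
    {t | Perfect h t ∧ ∀ d, (labelsAt d t).Subsingleton} =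
      uniformTree '' {bs | bs.length = h} := by
  ext t
  constructor
  · rintro ⟨hp, hs⟩
    exact exists_uniformTree_of_perfect hp hs
  · rintro ⟨bs, rfl, rfl⟩
    exact ⟨perfect_uniformTree bs, fun d => subsingleton_labelsAt_uniformTree d bs⟩

/-- For every `n ≥ 1`, the set `⟦⟨start, s_n⟩⟧_IO` of outputs of the
mtt `M_ex` in IO-mode on input `s_n` equals the set of all perfect `{f,g}`-trees
of height `2^n` in which any two (internal) nodes at the same depth carry the
same label; in particular, this set has cardinality `2^(2^n)`. -/
theorem io_outputs_of_Mex (n : ℕ) (hn : 1 ≤ n) :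
    ({t : RTree DE | SemIO (plainSel rulesEx) (.node (.call .start (sN n)) []) (embed t)}
        = {t | Perfect (2^n) t ∧ ∀ d : ℕ, (labelsAt d t).Subsingleton}) ∧
    {t : RTree DE | SemIO (plainSel rulesEx) (.node (.call .start (sN n)) []) (embed t)}.ncard
        = 2 ^ 2 ^ n := by
  rw [setOf_semIO_start_eq_image hn, setOf_perfect_uniform_eq_image,
    Set.ncard_image_of_injective _ uniformTree_injective, ncard_setOf_length_eq,
    Fintype.card_bool]
  exact ⟨rfl, rfl⟩

end MttF
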